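/- Let k be a field of characteristic 0 and let d, α₁, α₂, α₃ ≥ 2 be integers. The polynomial x + x^d·y^{α₁} + z^{α₂} + t^{α₃} in k[x,y,z,t] is irreducible. -/

import Mathlib

open Polynomial
set_option synthInstance.maxHeartbeats 1000000
set_option maxHeartbeats 1000000
set_option maxRecDepth 20000

lemma aux8 (k : Type*) [Field k] (d a b c : ℕ) (hb : 1 ≤ b) (hc : Odd c)
    (hbc : Nat.Coprime b c) :
    Irreducible
      (MvPolynomial.X 0 + (MvPolynomial.X 0) ^ d * (MvPolynomial.X 1) ^ a +
        (MvPolynomial.X 2) ^ b + (MvPolynomial.X 3) ^ c :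
        MvPolynomial (Fin 4) k) := by
  classical
  set R := MvPolynomial (Fin 3) k with hR
  set K := FractionRing R with hK
  set G : R := MvPolynomial.X 0 ^ b + (MvPolynomial.X 1 + MvPolynomial.X 1 ^ d * MvPolynomial.X 2 ^ a) with hG
  set σ : Equiv.Perm (Fin 4) :=
    ⟨![2,3,1,0], ![3,2,0,1], by intro i; fin_cases i <;> rfl, by intro i; fin_cases i <;> rfl⟩ with hσ
  rw [← MulEquiv.irreducible_iff (MvPolynomial.renameEquiv k σ),
      ← MulEquiv.irreducible_iff (MvPolynomial.finSuccEquiv k 3)]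
  have e0 : σ 0 = 2 := rfl
  have e1 : σ 1 = 3 := rfl
  have e2 : σ 2 = 1 := rfl
  have e3 : σ 3 = 0 := rfl
  have hren : (MvPolynomial.renameEquiv k σ)
      (MvPolynomial.X 0 + (MvPolynomial.X 0) ^ d * (MvPolynomial.X 1) ^ a +
        (MvPolynomial.X 2) ^ b + (MvPolynomial.X 3) ^ c : MvPolynomial (Fin 4) k)
      = MvPolynomial.X 2 + (MvPolynomial.X 2) ^ d * (MvPolynomial.X 3) ^ a +
        (MvPolynomial.X 1) ^ b + (MvPolynomial.X 0) ^ c := by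
    simp only [MvPolynomial.renameEquiv_apply, map_add, map_mul, map_pow,
      MvPolynomial.rename_X, e0, e1, e2, e3]
  rw [hren]
  have hfin : MvPolynomial.finSuccEquiv k 3
      (MvPolynomial.X 2 + (MvPolynomial.X 2) ^ d * (MvPolynomial.X 3) ^ a +
        (MvPolynomial.X 1) ^ b + (MvPolynomial.X 0) ^ c : MvPolynomial (Fin 4) k)
      = X ^ c + C G := by
    rw [show (MvPolynomial.X (1:Fin 4) : MvPolynomial (Fin 4) k) = MvPolynomial.X (Fin.succ 0) from rfl,
        show (MvPolynomial.X (2:Fin 4) : MvPolynomial (Fin 4) k) = MvPolynomial.X (Fin.succ 1) from rfl,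
        show (MvPolynomial.X (3:Fin 4) : MvPolynomial (Fin 4) k) = MvPolynomial.X (Fin.succ 2) from rfl]
    simp only [map_add, map_mul, map_pow, MvPolynomial.finSuccEquiv_X_zero,
      MvPolynomial.finSuccEquiv_X_succ]
    simp only [← Polynomial.C_pow, ← Polynomial.C_mul, ← Polynomial.C_add, hG]
    rw [add_comm]
    congr 2
    ring
  rw [hfin]
  have hcpos : 0 < c := hc.pos
  have hmon : (X ^ c + C G : R[X]).Monic :=
    monic_X_pow_add (lt_of_le_of_lt degree_C_le (by exact_mod_cast hcpos))
  rw [hmon.irreducible_iff_irreducible_map_fraction_map (K := K)]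
  have hmap : (X ^ c + C G : R[X]).map (algebraMap R K)
      = X ^ c - C (-(algebraMap R K G)) := by
    rw [map_neg, sub_neg_eq_add]
    simp [Polynomial.map_add, Polynomial.map_pow]
  rw [hmap]
  apply X_pow_sub_C_irreducible_of_odd hc
  intro p hp hpc x hx
  have hint : IsIntegral R x := by
    refine ⟨X ^ p + C G, monic_X_pow_add (lt_of_le_of_lt degree_C_le (by exact_mod_cast hp.pos)), ?_⟩
    simp [hx]
    exact neg_add_cancel (algebraMap R K G)
  obtain ⟨r, hr⟩ := IsIntegrallyClosed.isIntegral_iff.mp hint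
  have hrp : r ^ p = -G := by
    have inj : Function.Injective (algebraMap R K) := IsFractionRing.injective R K
    apply inj
    rw [map_pow, hr, map_neg, hx]
  have hψ : MvPolynomial.finSuccEquiv k 2 G
      = X ^ b + C (MvPolynomial.X 0 + MvPolynomial.X 0 ^ d * MvPolynomial.X 1 ^ a) := by
    rw [hG, show (MvPolynomial.X (1:Fin 3) : MvPolynomial (Fin 3) k) = MvPolynomial.X (Fin.succ 0) from rfl,
        show (MvPolynomial.X (2:Fin 3) : MvPolynomial (Fin 3) k) = MvPolynomial.X (Fin.succ 1) from rfl]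
    simp only [map_add, map_mul, map_pow, MvPolynomial.finSuccEquiv_X_zero,
      MvPolynomial.finSuccEquiv_X_succ]
  have hdeg : (MvPolynomial.finSuccEquiv k 2 G).natDegree = b := by
    rw [hψ, natDegree_X_pow_add_C]
  have hdvd : p ∣ b := by
    have h1 : ((MvPolynomial.finSuccEquiv k 2 r) ^ p).natDegree = b := by
      rw [← map_pow, hrp, map_neg, natDegree_neg, hdeg]
    rw [natDegree_pow] at h1
    exact ⟨_, h1.symm⟩
  have hone : p ∣ 1 := hbc ▸ Nat.dvd_gcd hdvd hpc
  exact hp.one_lt.ne' (Nat.eq_one_of_dvd_one hone)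

theorem stmt_8 (k : Type*) [Field k] [CharZero k]
    (d α₁ α₂ α₃ : ℕ) (hd : 2 ≤ d) (h₁ : 2 ≤ α₁) (h₂ : 2 ≤ α₂) (h₃ : 2 ≤ α₃)
    (h₁₂ : Nat.Coprime α₁ α₂) (h₁₃ : Nat.Coprime α₁ α₃) (h₂₃ : Nat.Coprime α₂ α₃)
    (h₁d : Nat.Coprime α₁ (d - 1)) :
    Irreducible
      (MvPolynomial.X 0 + (MvPolynomial.X 0) ^ d * (MvPolynomial.X 1) ^ α₁ +
        (MvPolynomial.X 2) ^ α₂ + (MvPolynomial.X 3) ^ α₃ :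
        MvPolynomial (Fin 4) k) := by
  by_cases hodd : Odd α₃
  · exact aux8 k d α₁ α₂ α₃ (by omega) hodd h₂₃
  · have h3e : Even α₃ := Nat.not_odd_iff_even.mp hodd
    have h2o : Odd α₂ := by
      rcases Nat.even_or_odd α₂ with he | ho
      · exfalso
        have : (2:ℕ) ∣ Nat.gcd α₂ α₃ := Nat.dvd_gcd he.two_dvd h3e.two_dvd
        rw [h₂₃] at this
        omega
      · exact ho
    rw [← MulEquiv.irreducible_iff (MvPolynomial.renameEquiv k (Equiv.swap (2:Fin 4) 3))]
    have hren : (MvPolynomial.renameEquiv k (Equiv.swap (2:Fin 4) 3))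
        (MvPolynomial.X 0 + (MvPolynomial.X 0) ^ d * (MvPolynomial.X 1) ^ α₁ +
          (MvPolynomial.X 2) ^ α₂ + (MvPolynomial.X 3) ^ α₃ : MvPolynomial (Fin 4) k)
        = MvPolynomial.X 0 + (MvPolynomial.X 0) ^ d * (MvPolynomial.X 1) ^ α₁ +
          (MvPolynomial.X 2) ^ α₃ + (MvPolynomial.X 3) ^ α₂ := by
      simp only [MvPolynomial.renameEquiv_apply, map_add, map_mul, map_pow,
        MvPolynomial.rename_X, Equiv.swap_apply_left, Equiv.swap_apply_right,
        Equiv.swap_apply_of_ne_of_ne (show (0:Fin 4) ≠ 2 by decide) (show (0:Fin 4) ≠ 3 by decide),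
        Equiv.swap_apply_of_ne_of_ne (show (1:Fin 4) ≠ 2 by decide) (show (1:Fin 4) ≠ 3 by decide)]
      ring
    rw [hren]
    exact aux8 k d α₁ α₃ α₂ (by omega) h2o h₂₃.symm
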